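/- arXiv:math/0605703 — 5 statements merged into one kernel-verified Lean document; each statement's English description precedes it below -/
import Mathlib

section
/- For every odd positive integer f, every natural number n, and every real number x, the Euler polynomials satisfy the distribution relation E_n(x) = f^n · Σ_{a=0}^{f-1} (-1)^a · E_n((x+a)/f). -/
/-- The Euler numbers `E₀ = 1`, `∑_{k=0}^{n} C(n,k) Eₖ + Eₙ = 0` for `n ≥ 1`. -/
noncomputable def eulerNumber : ℕ → ℚ
  | 0 => 1
  | n + 1 => (-1/2) * ∑ k ∈ (Finset.range (n+1)).attach,
      ((n+1).choose k.1 : ℚ) * eulerNumber k.1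
  decreasing_by exact Finset.mem_range.mp k.2

/-- The Euler polynomials `Eₙ(x) = ∑_{k=0}^n C(n,k) Eₖ x^{n-k}`. -/
noncomputable def eulerPoly (n : ℕ) (x : ℝ) : ℝ :=
  ∑ k ∈ Finset.range (n+1), (n.choose k : ℝ) * (eulerNumber k : ℝ) * x ^ (n - k)

/-!
Both sides have the exponential generating function `2e^{xt}/(e^t+1)`. Writing
`A(t) = ∑ Eₙ tⁿ/n!`, the recursion for the Euler numbers says `A(t)(e^t+1) = 2`, and
`∑ₙ Eₙ(x) tⁿ/n! = A(t) e^{xt}`. For odd `f` the alternating geometric sum gives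
`(∑_{a<f} (-e^t)^a)(e^t+1) = e^{ft}+1`, hence
`∑_{a<f} (-1)^a A(ft) e^{(x+a)t} = A(ft)(e^{ft}+1) e^{xt}/(e^t+1) = 2e^{xt}/(e^t+1)`,
and comparing coefficients of `tⁿ` gives the relation.
-/

open Finset PowerSeries
open scoped Nat

theorem eulerNumber_zero : eulerNumber 0 = 1 := by rw [eulerNumber]

theorem sum_range_choose_mul_eulerNumber_add {n : ℕ} (hn : n ≠ 0) :
    ∑ k ∈ range (n + 1), (n.choose k : ℚ) * eulerNumber k + eulerNumber n = 0 := by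
  obtain ⟨m, rfl⟩ := Nat.exists_eq_succ_of_ne_zero hn
  rw [sum_range_succ, Nat.choose_self, eulerNumber,
    sum_attach (range (m + 1)) fun k ↦ ((m + 1).choose k : ℚ) * eulerNumber k]
  ring

theorem exp_add_one_ne_zero {A : Type*} [CommRing A] [Algebra ℚ A] [Nontrivial A] :
    exp A + 1 ≠ 0 := fun h ↦ by
  have := algebraRat.charZero A
  simpa [one_add_one_eq_two] using congrArg constantCoeff h

section

variable (K : Type*) [Field K] [CharZero K]

noncomputable def eulerNumberSeries : K⟦X⟧ := mk fun n ↦ (eulerNumber n : K) / n !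

noncomputable def eulerPolySeries (x : K) : K⟦X⟧ := eulerNumberSeries K * rescale x (exp K)

variable {K}

theorem coeff_eulerPolySeries (n : ℕ) (x : K) :
    coeff n (eulerPolySeries K x) =
      (∑ k ∈ range (n + 1), (n.choose k : K) * eulerNumber k * x ^ (n - k)) / n ! := by
  rw [eulerPolySeries, coeff_mul, Nat.sum_antidiagonal_eq_sum_range_succ
    (fun i j ↦ coeff i (eulerNumberSeries K) * coeff j (rescale x (exp K))), sum_div]
  refine sum_congr rfl fun k hk ↦ ?_
  have hkn : k ≤ n := Nat.lt_succ_iff.mp (mem_range.mp hk)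
  simp only [eulerNumberSeries, coeff_mk, coeff_rescale, coeff_exp, map_div₀, map_one,
    map_natCast]
  have : (n ! : K) ≠ 0 := Nat.cast_ne_zero.mpr n.factorial_ne_zero
  rw [Nat.cast_choose K hkn]
  field_simp

theorem eulerNumberSeries_mul_exp_add_one : eulerNumberSeries K * (exp K + 1) = 2 := by
  ext n
  have h := coeff_eulerPolySeries n (1 : K)
  rw [eulerPolySeries, rescale_one, RingHom.id_apply] at h
  rw [mul_add, mul_one, map_add, h]
  rcases n with _ | n
  · norm_num [eulerNumberSeries, eulerNumber_zero, map_ofNat]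
  · have hsum := sum_range_choose_mul_eulerNumber_add n.succ_ne_zero
    simp only [eulerNumberSeries, coeff_mk, one_pow, mul_one]
    rw [← add_div, ← map_ofNat C 2, coeff_C, if_neg n.succ_ne_zero]
    exact_mod_cast (div_eq_zero_iff.mpr (Or.inl hsum))

theorem sum_neg_one_pow_smul_rescale_eulerPolySeries {f : ℕ} (hf : Odd f) (x : K) :
    ∑ a ∈ range f, (-1 : K) ^ a • rescale (f : K) (eulerPolySeries K ((x + a) / f)) =
      eulerPolySeries K x := by
  have hf0 : (f : K) ≠ 0 := Nat.cast_ne_zero.mpr hf.pos.ne'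
  set E := exp K
  set r := rescale (f : K)
  have hterm : ∀ a : ℕ, (-1 : K) ^ a • r (eulerPolySeries K ((x + a) / f)) =
      r (eulerNumberSeries K) * rescale x E * (-E) ^ a := by
    intro a
    rw [eulerPolySeries, map_mul, rescale_rescale, div_mul_cancel₀ _ hf0,
      ← exp_mul_exp_eq_exp_add, ← exp_pow_eq_rescale_exp, Algebra.smul_def, neg_pow E, map_pow,
      map_neg, map_one]
    ring
  have htele : (∑ a ∈ range f, (-E) ^ a) * (E + 1) = r (E + 1) := by
    have hgeom := geom_sum_mul_neg (-E) f
    rw [hf.neg_pow] at hgeom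
    rw [map_add, map_one, ← exp_pow_eq_rescale_exp]
    linear_combination hgeom
  refine mul_right_cancel₀ exp_add_one_ne_zero ?_
  rw [sum_congr rfl fun a _ ↦ hterm a, ← mul_sum, mul_assoc, htele, eulerPolySeries]
  calc r (eulerNumberSeries K) * rescale x E * r (E + 1)
      = r (eulerNumberSeries K * (E + 1)) * rescale x E := by rw [map_mul]; ring
    _ = eulerNumberSeries K * (E + 1) * rescale x E := by
      rw [eulerNumberSeries_mul_exp_add_one, map_ofNat]
    _ = _ := by ring

end

theorem coeff_eulerPolySeries_real (n : ℕ) (x : ℝ) :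
    coeff n (eulerPolySeries ℝ x) = eulerPoly n x / n ! :=
  coeff_eulerPolySeries n x

theorem eulerPoly_distribution_general (f : ℕ) (hodd : Odd f) (n : ℕ) (x : ℝ) :
    eulerPoly n x =
      (f : ℝ) ^ n * ∑ a ∈ Finset.range f, (-1 : ℝ) ^ a * eulerPoly n ((x + a) / f) := by
  have h := congrArg (coeff n) (sum_neg_one_pow_smul_rescale_eulerPolySeries hodd x)
  simp only [map_sum, coeff_smul, coeff_rescale, coeff_eulerPolySeries_real, smul_eq_mul] at h
  have hn : (n ! : ℝ) ≠ 0 := Nat.cast_ne_zero.mpr n.factorial_ne_zero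
  rw [← div_left_inj' hn, ← h, mul_sum, sum_div]
  exact sum_congr rfl fun a _ ↦ by ring

/-- Distribution relation for Euler polynomials:
for odd positive `f`, `Eₙ(x) = fⁿ ∑_{a=0}^{f-1} (-1)^a Eₙ((x+a)/f)`. -/
theorem eulerPoly_distribution (f : ℕ) (hf : 0 < f) (hodd : Odd f) (n : ℕ) (x : ℝ) :
    eulerPoly n x =
      (f : ℝ) ^ n * ∑ a ∈ Finset.range f, (-1 : ℝ) ^ a * eulerPoly n ((x + a) / f) :=
  eulerPoly_distribution_general f hodd n x
end

section
/- For every natural number n and every real number x, E_n(x) = (2^{n+1}/(n+1)) · (B_{n+1}((x+1)/2) − B_{n+1}(x/2)), where B_m denotes the m-th Bernoulli polynomial. -/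
open Polynomial Finset

/-- Euler polynomial as a rational polynomial. -/
noncomputable def EPoly (n : ℕ) : ℚ[X] :=
  ∑ k ∈ range (n+1), C ((n.choose k : ℚ) * eulerNumber k) * X ^ (n - k)

/-- The Bernoulli-side combination as a rational polynomial. -/
noncomputable def FPoly (n : ℕ) : ℚ[X] :=
  C ((2:ℚ)^(n+1)/((n:ℚ)+1)) *
    ((Polynomial.bernoulli (n+1)).comp (C (1/2 : ℚ) * (X + 1)) -
     (Polynomial.bernoulli (n+1)).comp (C (1/2 : ℚ) * X))

lemma derivative_EPoly (m : ℕ) :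
    derivative (EPoly (m+1)) = C ((m:ℚ)+1) * EPoly m := by
  rw [EPoly, derivative_sum, sum_range_succ]
  have hlast : derivative (C (((m+1).choose (m+1) : ℚ) * eulerNumber (m+1)) *
      X ^ (m+1-(m+1))) = 0 := by
    simp
  rw [hlast, add_zero, EPoly, mul_sum]
  refine sum_congr rfl fun k hk => ?_
  have hk' : k ≤ m := Nat.lt_succ_iff.mp (mem_range.mp hk)
  have hsub : m + 1 - k = (m - k) + 1 := by omega
  rw [derivative_C_mul, derivative_X_pow, hsub, Nat.add_sub_cancel]
  have hnat : (m+1).choose k * (m - k + 1) = (m+1) * m.choose k := by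
    have h := Nat.choose_mul_succ_eq m k
    have h2 : m - k + 1 = m + 1 - k := by omega
    rw [h2, ← h]; ring
  have hc : ((m+1).choose k : ℚ) * ((m - k + 1 : ℕ) : ℚ) =
      ((m:ℚ)+1) * (m.choose k : ℚ) := by
    exact_mod_cast congrArg (Nat.cast (R := ℚ)) hnat
  rw [← mul_assoc, ← mul_assoc, mul_comm (C (((m+1).choose k : ℚ) * eulerNumber k)) _,
    ← C_mul, ← C_mul]
  congr 1
  exact congrArg C (by linear_combination eulerNumber k * hc)

lemma derivative_FPoly (m : ℕ) :
    derivative (FPoly (m+1)) = C ((m:ℚ)+1) * FPoly m := by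
  have hdb : derivative (Polynomial.bernoulli (m+1+1)) =
      C ((m:ℚ)+2) * Polynomial.bernoulli (m+1) := by
    rw [Polynomial.derivative_bernoulli_add_one (m+1)]
    congr 1
    push_cast [map_add, map_natCast, map_ofNat]
    ring
  have h1 : derivative (C (1/2 : ℚ) * (X + 1)) = C (1/2 : ℚ) := by simp
  have h2 : derivative (C (1/2 : ℚ) * X) = C (1/2 : ℚ) := by simp
  rw [FPoly, FPoly, derivative_C_mul, derivative_sub, derivative_comp, derivative_comp,
    hdb, h1, h2, mul_comp, C_comp, mul_comp, C_comp]
  generalize (Polynomial.bernoulli (m+1)).comp (C (1/2:ℚ) * (X+1)) = P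
  generalize (Polynomial.bernoulli (m+1)).comp (C (1/2:ℚ) * X) = Q
  have hc : ((2:ℚ)^(m+1+1)/((↑(m+1):ℚ)+1)) * (((m:ℚ)+2) * (1/2)) =
      ((m:ℚ)+1) * ((2:ℚ)^(m+1)/((m:ℚ)+1)) := by
    have h1 : ((m:ℚ)+1) ≠ 0 := by positivity
    push_cast
    have h2 : ((m:ℚ)+1+1) ≠ 0 := by positivity
    field_simp
    ring
  calc C ((2:ℚ)^(m+1+1)/((↑(m+1):ℚ)+1)) * (C (1/2 : ℚ) * (C ((m:ℚ)+2) * P) - C (1/2 : ℚ) * (C ((m:ℚ)+2) * Q))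
      = C (((2:ℚ)^(m+1+1)/((↑(m+1):ℚ)+1)) * (((m:ℚ)+2) * (1/2))) * (P - Q) := by
        rw [C_mul, C_mul]; ring
    _ = C (((m:ℚ)+1) * ((2:ℚ)^(m+1)/((m:ℚ)+1))) * (P - Q) := by rw [hc]
    _ = C ((m:ℚ)+1) * (C ((2:ℚ)^(m+1)/((m:ℚ)+1)) * (P - Q)) := by rw [C_mul]; ring

lemma eulerNumber_rec (m : ℕ) :
    ∑ k ∈ range (m+2), ((m+1).choose k : ℚ) * eulerNumber k = - eulerNumber (m+1) := by
  have hdef : eulerNumber (m+1) =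
      (-1/2) * ∑ k ∈ range (m+1), ((m+1).choose k : ℚ) * eulerNumber k := by
    rw [eulerNumber]
    congr 1
    exact Finset.sum_attach (range (m+1)) (fun k => ((m+1).choose k : ℚ) * eulerNumber k)
  rw [sum_range_succ, Nat.choose_self]
  rw [hdef]
  push_cast
  ring

lemma EPoly_eval_sum (m : ℕ) :
    (EPoly (m+1)).eval 0 + (EPoly (m+1)).eval 1 = 0 := by
  have h0 : (EPoly (m+1)).eval 0 = eulerNumber (m+1) := by
    rw [EPoly, eval_finset_sum]
    rw [Finset.sum_eq_single (m+1)]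
    · simp
    · intro k hk hne
      have h : m + 1 - k ≠ 0 := by
        have := mem_range.mp hk; omega
      simp [zero_pow h]
    · intro h; exact absurd (self_mem_range_succ (m+1)) h
  have h1 : (EPoly (m+1)).eval 1 = - eulerNumber (m+1) := by
    rw [EPoly, eval_finset_sum, ← eulerNumber_rec m]
    refine sum_congr rfl fun k hk => ?_
    simp
  rw [h0, h1]; ring

lemma FPoly_eval_sum (m : ℕ) :
    (FPoly (m+1)).eval 0 + (FPoly (m+1)).eval 1 = 0 := by
  have hB : (Polynomial.bernoulli (m+1+1)).eval 1 = (Polynomial.bernoulli (m+1+1)).eval 0 := by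
    rw [Polynomial.bernoulli_eval_one, Polynomial.bernoulli_eval_zero,
      bernoulli_eq_bernoulli'_of_ne_one (by omega)]
  simp only [FPoly, eval_mul, eval_C, eval_sub, eval_comp, eval_mul, eval_add, eval_C, eval_X,
    eval_one]
  rw [show (1/2 : ℚ) * (0 + 1) = 1/2 by norm_num, show (1/2 : ℚ) * 0 = 0 by norm_num,
    show (1/2 : ℚ) * (1 + 1) = 1 by norm_num, show (1/2 : ℚ) * 1 = 1/2 by norm_num, hB]
  ring

lemma EPoly_eq_FPoly (n : ℕ) : EPoly n = FPoly n := by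
  induction n with
  | zero =>
    have hb1 : (Polynomial.bernoulli 1 : ℚ[X]) = X - C (1/2) := by
      simp [Polynomial.bernoulli, Finset.sum_range_succ, C_mul_X_pow_eq_monomial.symm]
      rw [show (-1/2 : ℚ) = -(1/2) by norm_num, map_neg]; ring
    have he0 : eulerNumber 0 = 1 := by rw [eulerNumber]
    rw [EPoly, FPoly]
    simp [hb1, sub_comp, he0]
    have h22 : C (2:ℚ) * (C (2⁻¹:ℚ) * (X+1) - C (2⁻¹:ℚ) * X) = C (2:ℚ) * C (2⁻¹:ℚ) := by ring
    rw [h22, ← C_mul]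
    norm_num
  | succ m ih =>
    have hd : derivative (EPoly (m+1) - FPoly (m+1)) = 0 := by
      rw [derivative_sub, derivative_EPoly, derivative_FPoly, ih, sub_self]
    have hC := Polynomial.eq_C_of_derivative_eq_zero hd
    have heval : (EPoly (m+1) - FPoly (m+1)).eval 0 + (EPoly (m+1) - FPoly (m+1)).eval 1 = 0 := by
      simp only [eval_sub]
      have hE := EPoly_eval_sum m
      have hF := FPoly_eval_sum m
      linarith
    rw [hC] at heval
    simp only [eval_C] at heval
    have hc0 : (EPoly (m+1) - FPoly (m+1)).coeff 0 = 0 := by linarith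
    have hzero : EPoly (m+1) - FPoly (m+1) = 0 := by rw [hC, hc0, map_zero]
    exact sub_eq_zero.mp hzero

/-- `Eₙ(x) = (2^{n+1}/(n+1)) (B_{n+1}((x+1)/2) − B_{n+1}(x/2))`, where `B_m` is the
`m`-th Bernoulli polynomial (with `B₁(0) = -1/2`). -/
theorem eulerPoly_eq_bernoulli (n : ℕ) (x : ℝ) :
    eulerPoly n x =
      2 ^ (n + 1) / (n + 1) *
        (Polynomial.aeval ((x + 1) / 2) (Polynomial.bernoulli (n + 1)) -
         Polynomial.aeval (x / 2) (Polynomial.bernoulli (n + 1))) := by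
  have hE : eulerPoly n x = Polynomial.aeval x (EPoly n) := by
    rw [EPoly, eulerPoly, map_sum]
    refine sum_congr rfl fun k _ => ?_
    simp [mul_comm]
  have hF : Polynomial.aeval x (FPoly n) =
      2 ^ (n + 1) / (n + 1) *
        (Polynomial.aeval ((x + 1) / 2) (Polynomial.bernoulli (n + 1)) -
         Polynomial.aeval (x / 2) (Polynomial.bernoulli (n + 1))) := by
    rw [FPoly, map_mul, map_sub, aeval_comp, aeval_comp]
    have h1 : (Polynomial.aeval x) (C (1/2 : ℚ) * (X + 1)) = (x + 1) / 2 := by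
      simp; ring
    have h2 : (Polynomial.aeval x) (C (1/2 : ℚ) * X) = x / 2 := by
      simp; ring
    rw [h1, h2]
    congr 1
    rw [aeval_C]
    push_cast
    norm_num
  rw [hE, EPoly_eq_FPoly, hF]
end

section
/- Let p be an odd prime and t a nonnegative integer with t ≡ 0 (mod p−1). For an integer s, define l_p(s, ω^t) := Σ_{a=1}^{p-1} (-1)^a ⟨a⟩^{-s} ω(a)^t Σ_{j=0}^{∞} binom(-s, j)(p/a)^j E_j, a p-adically convergent series with value in ℤ_p. Then for all integers s₁ and s₂, l_p(s₁, ω^t) ≡ l_p(s₂, ω^t) (mod p), i.e. l_p(s₁, ω^t) − l_p(s₂, ω^t) ∈ pℤ_p. -/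
/-- The generalized binomial coefficient `binom(x, m) = x(x−1)⋯(x−m+1)/m!`. -/
noncomputable def qbinom (x : ℚ) (m : ℕ) : ℚ :=
  (descPochhammer ℚ m).eval x / m.factorial

/-- The `p`-adic `l`-function
`l_p(s, ω^t) = ∑_{a=1}^{p-1} (-1)^a ⟨a⟩^{-s} ω(a)^t ∑_{j=0}^{∞} binom(-s,j)(p/a)^j E_j`,
where `⟨a⟩ = a/ω(a)`. -/
noncomputable def padicL (p : ℕ) [Fact p.Prime] (ω : ℕ → ℤ_[p]) (t : ℕ) (s : ℤ) : ℚ_[p] :=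
  ∑ a ∈ Finset.Icc 1 (p - 1),
    (-1 : ℚ_[p]) ^ a * ((a : ℚ_[p]) / (ω a : ℚ_[p])) ^ (-s) * ((ω a : ℚ_[p])) ^ t *
      ∑' j : ℕ, (qbinom (-s : ℚ) j : ℚ_[p]) * ((p : ℚ_[p]) / (a : ℚ_[p])) ^ j *
        (eulerNumber j : ℚ_[p])

/-! Each summand of `l_p(s, ω^t)` is the `s`-independent `p`-adic integer `(-1)^a ω(a)^t` times
`⟨a⟩^{-s} ∑_j binom(-s, j) (p/a)^j E_j`, and both factors of the latter are `≡ 1 (mod p)`: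
`⟨a⟩ ≡ 1` because `ω(a) ≡ a`, and every term of the series with `j ≥ 1` is divisible by `p`,
since `binom(-s, j) ∈ ℤ` and `E_j ∈ ℤ_p` (the recursion for `E_j` only divides by `2`).
Hence every summand is congruent mod `p` to the same `s`-independent number. -/

section Ultrametric

variable {K : Type*} [NormedField K] [IsUltrametricDist K]

theorem norm_mul_sub_one_le {x y : K} {r : ℝ} (hx : ‖x‖ ≤ 1) (hx1 : ‖x - 1‖ ≤ r)
    (hy1 : ‖y - 1‖ ≤ r) : ‖x * y - 1‖ ≤ r :=
  calc ‖x * y - 1‖ = ‖x * (y - 1) + (x - 1)‖ := by ring_nf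
    _ ≤ max ‖x * (y - 1)‖ ‖x - 1‖ := IsUltrametricDist.norm_add_le_max _ _
    _ ≤ r := by
      refine max_le ?_ hx1
      rw [norm_mul]
      exact (mul_le_of_le_one_left (norm_nonneg _) hx).trans hy1

theorem norm_pow_sub_one_le {x : K} {r : ℝ} (hx : ‖x‖ = 1) (hr : 0 ≤ r) (hx1 : ‖x - 1‖ ≤ r)
    (n : ℕ) : ‖x ^ n - 1‖ ≤ r := by
  induction n with
  | zero => simpa using hr
  | succ n ih => simpa [pow_succ', mul_comm] using norm_mul_sub_one_le hx.le hx1 ih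

theorem norm_zpow_sub_one_le {x : K} {r : ℝ} (hx : ‖x‖ = 1) (hr : 0 ≤ r) (hx1 : ‖x - 1‖ ≤ r)
    (n : ℤ) : ‖x ^ n - 1‖ ≤ r := by
  have hx0 : x ≠ 0 := norm_ne_zero_iff.mp (hx ▸ one_ne_zero)
  obtain ⟨m, rfl | rfl⟩ := n.eq_nat_or_neg
  · simpa using norm_pow_sub_one_le hx hr hx1 m
  · have h : x ^ (-(m : ℤ)) - 1 = (1 - x ^ m) * (x ^ m)⁻¹ := by
      rw [zpow_neg, zpow_natCast, sub_mul, one_mul, mul_inv_cancel₀ (pow_ne_zero m hx0)]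
    rw [h, norm_mul, norm_inv, norm_pow, hx, one_pow, inv_one, mul_one, norm_sub_rev]
    exact norm_pow_sub_one_le hx hr hx1 m

variable {ι : Type*} {s : Finset ι} {c X Y : ι → K}

theorem norm_sum_mul_le_one (hc : ∀ i ∈ s, ‖c i‖ ≤ 1) (hX : ∀ i ∈ s, ‖X i - 1‖ ≤ 1) :
    ‖∑ i ∈ s, c i * X i‖ ≤ 1 := by
  refine IsUltrametricDist.norm_sum_le_of_forall_le_of_nonneg zero_le_one fun i hi => ?_
  have hXi : ‖X i‖ ≤ 1 := by
    simpa using (IsUltrametricDist.norm_add_le_max (X i - 1) 1).trans (max_le (hX i hi) (by simp))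
  rw [norm_mul]
  exact mul_le_one₀ (hc i hi) (norm_nonneg _) hXi

theorem norm_sum_mul_sub_sum_mul_le {r : ℝ} (hr : 0 ≤ r) (hc : ∀ i ∈ s, ‖c i‖ ≤ 1)
    (hX : ∀ i ∈ s, ‖X i - 1‖ ≤ r) (hY : ∀ i ∈ s, ‖Y i - 1‖ ≤ r) :
    ‖∑ i ∈ s, c i * X i - ∑ i ∈ s, c i * Y i‖ ≤ r := by
  rw [← Finset.sum_sub_distrib]
  refine IsUltrametricDist.norm_sum_le_of_forall_le_of_nonneg hr fun i hi => ?_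
  have hXY : ‖X i - Y i‖ ≤ r := by
    simpa [dist_eq_norm] using (IsUltrametricDist.dist_triangle_max (X i) 1 (Y i)).trans
      (max_le (by simpa [dist_eq_norm] using hX i hi)
        (by simpa [dist_eq_norm, norm_sub_rev] using hY i hi))
  rw [← mul_sub, norm_mul]
  exact (mul_le_of_le_one_left (norm_nonneg _) (hc i hi)).trans hXY

end Ultrametric

theorem norm_eq_one_of_pow_eq_one {R : Type*} [SeminormedRing R] [NormOneClass R]
    [NormMulClass R] {u : R} {n : ℕ} (h : u ^ n = 1) (hn : n ≠ 0) : ‖u‖ = 1 :=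
  (pow_eq_one_iff_of_nonneg (norm_nonneg u) hn).mp (by rw [← norm_pow, h, norm_one])

section Padic

variable {p : ℕ} [Fact p.Prime]

theorem qbinom_intCast (k : ℤ) (j : ℕ) : qbinom k j = ((Ring.choose k j : ℤ) : ℚ) := by
  have hdesc : (descPochhammer ℤ j).eval k = (j.factorial : ℤ) * Ring.choose k j := by
    rw [Polynomial.eval_eq_smeval, Ring.descPochhammer_eq_factorial_smul_choose, nsmul_eq_mul]
  rw [qbinom, ← descPochhammer_eval_cast, hdesc, Int.cast_mul, Int.cast_natCast]
  field_simp

theorem norm_qbinom_intCast_le_one (k : ℤ) (j : ℕ) : ‖(qbinom k j : ℚ_[p])‖ ≤ 1 := by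
  rw [qbinom_intCast, Rat.cast_intCast]
  exact Padic.norm_int_le_one _

theorem norm_eulerNumber_le_one (hp : p ≠ 2) (n : ℕ) : ‖(eulerNumber n : ℚ_[p])‖ ≤ 1 := by
  induction n using Nat.strong_induction_on with
  | _ n ih =>
  cases n with
  | zero => simp [eulerNumber]
  | succ m =>
    have h2 : ‖(2 : ℚ_[p])‖ = 1 := by
      exact_mod_cast Padic.norm_natCast_eq_one_iff.mpr
        ((Nat.coprime_primes Fact.out Nat.prime_two).mpr hp)
    rw [eulerNumber]
    push_cast
    rw [norm_mul, norm_div, norm_neg, norm_one, h2, div_one, one_mul]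
    refine IsUltrametricDist.norm_sum_le_of_forall_le_of_nonneg zero_le_one fun k _ => ?_
    rw [norm_mul]
    exact mul_le_one₀ (IsUltrametricDist.norm_natCast_le_one _ _) (norm_nonneg _)
      (ih k (Finset.mem_range.mp k.2))

section EulerSeries

variable (hp : p ≠ 2) (k : ℤ) {x : ℚ_[p]}
include hp

theorem norm_qbinom_mul_pow_mul_eulerNumber_le (j : ℕ) :
    ‖(qbinom k j : ℚ_[p]) * x ^ j * (eulerNumber j : ℚ_[p])‖ ≤ ‖x‖ ^ j := by
  rw [norm_mul, norm_mul, norm_pow]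
  calc _ ≤ 1 * ‖x‖ ^ j * 1 := by
        gcongr
        exacts [norm_qbinom_intCast_le_one k j, norm_eulerNumber_le_one hp j]
    _ = ‖x‖ ^ j := by ring

theorem summable_qbinom_mul_pow_mul_eulerNumber (hx : ‖x‖ < 1) :
    Summable fun j => (qbinom k j : ℚ_[p]) * x ^ j * (eulerNumber j : ℚ_[p]) :=
  .of_norm_bounded (summable_geometric_of_lt_one (norm_nonneg x) hx)
    (norm_qbinom_mul_pow_mul_eulerNumber_le hp k)

theorem norm_tsum_qbinom_mul_pow_mul_eulerNumber_sub_one_le (hx : ‖x‖ < 1) :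
    ‖(∑' j, (qbinom k j : ℚ_[p]) * x ^ j * (eulerNumber j : ℚ_[p])) - 1‖ ≤ ‖x‖ := by
  have hzero : (qbinom k 0 : ℚ_[p]) * x ^ 0 * (eulerNumber 0 : ℚ_[p]) = 1 := by
    simp [qbinom, eulerNumber]
  rw [(summable_qbinom_mul_pow_mul_eulerNumber hp k hx).tsum_eq_zero_add, hzero,
    add_sub_cancel_left]
  refine IsUltrametricDist.norm_tsum_le_of_forall_le_of_nonneg (norm_nonneg x) fun j => ?_
  exact (norm_qbinom_mul_pow_mul_eulerNumber_le hp k (j + 1)).trans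
    (pow_le_of_le_one (norm_nonneg x) hx.le j.succ_ne_zero)

end EulerSeries

theorem PadicInt.norm_le_inv_of_norm_lt_one {z : ℤ_[p]} (hz : ‖z‖ < 1) : ‖z‖ ≤ (p : ℝ)⁻¹ := by
  simpa using (PadicInt.norm_lt_pow_iff_norm_le_pow_sub_one z 0).mp (by simpa using hz)

theorem norm_p_div_natCast {a : ℕ} (ha : p.Coprime a) : ‖(p : ℚ_[p]) / a‖ = (p : ℝ)⁻¹ := by
  rw [norm_div, Padic.norm_p, Padic.norm_natCast_eq_one_iff.mpr ha, div_one]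

theorem norm_p_div_natCast_lt_one {a : ℕ} (ha : p.Coprime a) : ‖(p : ℚ_[p]) / a‖ < 1 := by
  rw [norm_p_div_natCast ha]
  exact inv_lt_one_of_one_lt₀ (mod_cast (Fact.out : p.Prime).one_lt)

noncomputable def padicLFactor (p : ℕ) [Fact p.Prime] (ω : ℕ → ℤ_[p]) (s : ℤ) (a : ℕ) : ℚ_[p] :=
  ((a : ℚ_[p]) / (ω a : ℚ_[p])) ^ (-s) *
    ∑' j : ℕ, (qbinom (-s : ℚ) j : ℚ_[p]) * ((p : ℚ_[p]) / (a : ℚ_[p])) ^ j *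
      (eulerNumber j : ℚ_[p])

theorem padicL_eq_sum_mul_padicLFactor (ω : ℕ → ℤ_[p]) (t : ℕ) (s : ℤ) :
    padicL p ω t s =
      ∑ a ∈ Finset.Icc 1 (p - 1), ((-1) ^ a * (ω a : ℚ_[p]) ^ t) * padicLFactor p ω s a :=
  Finset.sum_congr rfl fun _ _ => by rw [padicLFactor]; ring

theorem norm_padicLFactor_sub_one_le (hp : p ≠ 2) {ω : ℕ → ℤ_[p]} (s : ℤ) {a : ℕ}
    (ha : p.Coprime a) (hω : ‖ω a‖ = 1) (hωa : ‖ω a - a‖ < 1) :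
    ‖padicLFactor p ω s a - 1‖ ≤ (p : ℝ)⁻¹ := by
  have hω' : ‖(ω a : ℚ_[p])‖ = 1 := by rwa [PadicInt.padic_norm_e_of_padicInt]
  have hωa' : ‖(a : ℚ_[p]) - ω a‖ ≤ (p : ℝ)⁻¹ := by
    rw [norm_sub_rev, ← PadicInt.coe_natCast, ← PadicInt.coe_sub,
      PadicInt.padic_norm_e_of_padicInt]
    exact PadicInt.norm_le_inv_of_norm_lt_one hωa
  have hunit : ‖(a : ℚ_[p]) / ω a‖ = 1 := by
    rw [norm_div, Padic.norm_natCast_eq_one_iff.mpr ha, hω', div_one]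
  have hunit_sub : ‖(a : ℚ_[p]) / ω a - 1‖ ≤ (p : ℝ)⁻¹ := by
    have hω0 : (ω a : ℚ_[p]) ≠ 0 := by rw [← norm_ne_zero_iff, hω']; exact one_ne_zero
    rwa [div_sub_one hω0, norm_div, hω', div_one]
  have hseries := norm_tsum_qbinom_mul_pow_mul_eulerNumber_sub_one_le hp (-s)
    (norm_p_div_natCast_lt_one ha)
  rw [norm_p_div_natCast ha, Int.cast_neg] at hseries
  refine norm_mul_sub_one_le (by rw [norm_zpow, hunit, one_zpow]) ?_ hseries
  exact norm_zpow_sub_one_le hunit (by positivity) hunit_sub (-s)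

end Padic

theorem lp_congruence_mod_p_general (p : ℕ) [Fact p.Prime] (hp : Odd p)
    (t : ℕ) (ω : ℕ → ℤ_[p])
    (hω : ∀ a : ℕ, 0 < a → a < p → (ω a) ^ (p - 1) = 1 ∧ ‖ω a - (a : ℤ_[p])‖ < 1) :
    (∀ s : ℤ, ∀ a ∈ Finset.Icc 1 (p - 1),
        Summable (fun j : ℕ => (qbinom (-s : ℚ) j : ℚ_[p]) *
          ((p : ℚ_[p]) / (a : ℚ_[p])) ^ j * (eulerNumber j : ℚ_[p]))) ∧
    (∀ s : ℤ, ‖padicL p ω t s‖ ≤ 1) ∧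
    (∀ s₁ s₂ : ℤ, ‖padicL p ω t s₁ - padicL p ω t s₂‖ ≤ (p : ℝ)⁻¹) := by
  have hp2 : p ≠ 2 := by rintro rfl; exact absurd hp (by decide)
  have hprime : p.Prime := Fact.out
  have hrange : ∀ a ∈ Finset.Icc 1 (p - 1), 0 < a ∧ a < p := fun a ha => by
    have := hprime.one_lt
    rw [Finset.mem_Icc] at ha
    omega
  have hcoprime : ∀ a ∈ Finset.Icc 1 (p - 1), p.Coprime a := fun a ha =>
    Nat.coprime_of_lt_prime (hrange a ha).1.ne' (hrange a ha).2 hprime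
  have hfactor : ∀ s, ∀ a ∈ Finset.Icc 1 (p - 1), ‖padicLFactor p ω s a - 1‖ ≤ (p : ℝ)⁻¹ := by
    intro s a ha
    obtain ⟨hωp, hωa⟩ := hω a (hrange a ha).1 (hrange a ha).2
    exact norm_padicLFactor_sub_one_le hp2 s (hcoprime a ha)
      (norm_eq_one_of_pow_eq_one hωp (by have := hprime.two_le; omega)) hωa
  have hcoeff : ∀ a ∈ Finset.Icc 1 (p - 1), ‖(-1) ^ a * (ω a : ℚ_[p]) ^ t‖ ≤ 1 := fun a _ => by
    simpa [PadicInt.padic_norm_e_of_padicInt] using pow_le_one₀ (norm_nonneg _) (ω a).norm_le_one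
  refine ⟨fun s a ha => ?_, fun s => ?_, fun s₁ s₂ => ?_⟩
  · rw [← Int.cast_neg]
    exact summable_qbinom_mul_pow_mul_eulerNumber hp2 (-s)
      (norm_p_div_natCast_lt_one (hcoprime a ha))
  · rw [padicL_eq_sum_mul_padicLFactor]
    exact norm_sum_mul_le_one hcoeff fun a ha =>
      (hfactor s a ha).trans (inv_le_one_of_one_le₀ (mod_cast hprime.one_le))
  · rw [padicL_eq_sum_mul_padicLFactor, padicL_eq_sum_mul_padicLFactor]
    exact norm_sum_mul_sub_sum_mul_le (by positivity) hcoeff (hfactor s₁) (hfactor s₂)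

/-- For an odd prime `p`, `t ≡ 0 (mod p-1)`, and `ω a` the Teichmüller lift of `a`,
the series defining `l_p(s, ω^t)` converges `p`-adically, its value lies in `ℤ_p`, and
`l_p(s₁, ω^t) ≡ l_p(s₂, ω^t) (mod p)` for all integers `s₁, s₂`. -/
theorem lp_congruence_mod_p (p : ℕ) [Fact p.Prime] (hp : Odd p)
    (t : ℕ) (ht : (p - 1) ∣ t) (ω : ℕ → ℤ_[p])
    (hω : ∀ a : ℕ, 0 < a → a < p → (ω a) ^ (p - 1) = 1 ∧ ‖ω a - (a : ℤ_[p])‖ < 1) :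
    (∀ s : ℤ, ∀ a ∈ Finset.Icc 1 (p - 1),
        Summable (fun j : ℕ => (qbinom (-s : ℚ) j : ℚ_[p]) *
          ((p : ℚ_[p]) / (a : ℚ_[p])) ^ j * (eulerNumber j : ℚ_[p]))) ∧
    (∀ s : ℤ, ‖padicL p ω t s‖ ≤ 1) ∧
    (∀ s₁ s₂ : ℤ, ‖padicL p ω t s₁ - padicL p ω t s₂‖ ≤ (p : ℝ)⁻¹) :=
  lp_congruence_mod_p_general p hp t ω hω
end

section
/- For all natural numbers k, j with j + k > 0 and every rational number r with r + k ≠ 1, the generalized binomial coefficients satisfy (1/(r+k−1)) · binom(−r, k) · binom(1−r−k, j) = (−1/(j+k)) · binom(−r, k+j−1) · binom(k+j, j). -/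
open Polynomial

/-- `x - k + 1` is the last factor of `x(x-1)⋯(x-k+1)` and the first of `(x-k+1)⋯(x-k-j+2)`;
the remaining factors are those of `x(x-1)⋯(x-n+1)`. -/
theorem descPochhammer_eval_mul_eval_sub_add_one {R : Type*} [CommRing R] (x : R) {k j n : ℕ}
    (hkjn : k + j = n + 1) :
    (descPochhammer R k).eval x * (descPochhammer R j).eval (x - k + 1) =
      (x - k + 1) * (descPochhammer R n).eval x := by
  rcases k with _ | k
  · obtain rfl : j = n + 1 := by omega
    simp [descPochhammer_succ_left]
  · obtain rfl : n = k + j := by omega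
    have hmul := congrArg (eval x) (descPochhammer_mul (R := R) k j)
    simp only [eval_mul, eval_comp, eval_sub, eval_X, eval_natCast] at hmul
    rw [Nat.cast_succ, sub_add_eq_sub_sub, sub_add_cancel, descPochhammer_succ_eval, ← hmul]
    ring

theorem qbinom_mul_qbinom_sub_add_one (x : ℚ) {k j n : ℕ} (hkjn : k + j = n + 1) :
    qbinom x k * qbinom (x - k + 1) j * (n + 1) =
      (x - k + 1) * qbinom x n * ((n + 1).choose j : ℚ) := by
  have hfact : ((n + 1).choose j * j.factorial * k.factorial : ℚ) = (n + 1) * n.factorial := by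
    have h := Nat.choose_mul_factorial_mul_factorial (n := n + 1) (k := j) (by omega)
    rw [show n + 1 - j = k by omega, Nat.factorial_succ] at h
    exact_mod_cast h
  unfold qbinom
  field_simp
  rw [descPochhammer_eval_mul_eval_sub_add_one x hkjn]
  linear_combination -(x - k + 1) * eval x (descPochhammer ℚ n) * hfact

/-- For naturals `k, j` with `j + k > 0` and rational `r` with `r + k ≠ 1`:
`(1/(r+k−1)) binom(−r, k) binom(1−r−k, j) = (−1/(j+k)) binom(−r, k+j−1) binom(k+j, j)`. -/
theorem binom_identity_one (k j : ℕ) (hjk : 0 < j + k) (r : ℚ) (hr : r + k ≠ 1) :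
    1 / (r + k - 1) * qbinom (-r) k * qbinom (1 - r - k) j =
      -1 / (j + k : ℚ) * qbinom (-r) (k + j - 1) * ((k + j).choose j : ℚ) := by
  obtain ⟨n, hn⟩ : ∃ n, k + j = n + 1 := ⟨k + j - 1, by omega⟩
  have key := qbinom_mul_qbinom_sub_add_one (-r) hn
  rw [show -r - k + 1 = 1 - r - k by ring] at key
  have hn' : (j + k : ℚ) = n + 1 := by exact_mod_cast (by omega : j + k = n + 1)
  rw [hn, Nat.add_sub_cancel, hn']
  have hr' : r + k - 1 ≠ 0 := sub_ne_zero.mpr hr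
  field_simp
  linear_combination key
end

section
/- For all natural numbers k, j and every rational number r with r + k ≠ 0, the generalized binomial coefficients satisfy (r/(r+k)) · binom(−r−1, k) · binom(−r−k, j) = binom(−r, k+j) · binom(k+j, j). -/
/-- For naturals `k, j` and rational `r` with `r + k ≠ 0`:
`(r/(r+k)) binom(−r−1, k) binom(−r−k, j) = binom(−r, k+j) binom(k+j, j)`. -/
theorem binom_identity_two (k j : ℕ) (r : ℚ) (hr : r + k ≠ 0) :
    r / (r + k) * qbinom (-r - 1) k * qbinom (-r - k) j =
      qbinom (-r) (k + j) * ((k + j).choose j : ℚ) := by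
  have hA : (-r) * (descPochhammer ℚ k).eval (-r - 1) =
      (descPochhammer ℚ k).eval (-r) * (-r - k) := by
    have h1 : (descPochhammer ℚ (k+1)).eval (-r) =
        (-r) * (descPochhammer ℚ k).eval (-r - 1) := by
      rw [descPochhammer_succ_left]
      simp
    have h2 := descPochhammer_succ_eval (n := k) (-r : ℚ)
    rw [h1] at h2
    linarith [h2]
  have hmul : (descPochhammer ℚ k).eval (-r) * (descPochhammer ℚ j).eval (-r - k) =
      (descPochhammer ℚ (k + j)).eval (-r) := by
    have := congrArg (Polynomial.eval (-r : ℚ)) (descPochhammer_mul ℚ k j)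
    simpa using this
  have hfac : ((k + j).choose j : ℚ) * k.factorial * j.factorial = (k + j).factorial := by
    have := Nat.choose_mul_factorial_mul_factorial (Nat.le_add_left j k)
    have h' : (k + j).choose j * j.factorial * k.factorial = (k + j).factorial := by
      simpa using this
    exact_mod_cast by push_cast [← h']; ring
  have hk : (k.factorial : ℚ) ≠ 0 := by exact_mod_cast k.factorial_ne_zero
  have hj : (j.factorial : ℚ) ≠ 0 := by exact_mod_cast j.factorial_ne_zero
  have hkj : ((k + j).factorial : ℚ) ≠ 0 := by exact_mod_cast (k + j).factorial_ne_zero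
  unfold qbinom
  rw [div_mul_div_comm, div_mul_div_comm, div_mul_eq_mul_div, div_eq_div_iff (by positivity) hkj]
  have key : r * (descPochhammer ℚ k).eval (-r - 1) =
      (descPochhammer ℚ k).eval (-r) * (r + k) := by linarith [hA]
  linear_combination ((descPochhammer ℚ j).eval (-r - k) * ((k + j).factorial : ℚ)) * key +
    ((r + k) * ((k + j).factorial : ℚ)) * hmul -
    ((descPochhammer ℚ (k + j)).eval (-r) * (r + k)) * hfac
end
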